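/- Sign characterization of the Dinkelbach function: in the setting where F(q) = sup_{x∈S} [R(x) - q P(x)] with P ≥ δ > 0 on nonempty S and q* = sup_{x∈S} R(x)/P(x) finite, one has F(q) > 0 for q < q*, F(q*) = 0 (if the supremum defining q* is attained), and F(q) ≤ 0 for q ≥ q*. -/
import Mathlib


theorem stmt15 {S : Type*} [Nonempty S] (R P : S → ℝ) (δ : ℝ) (hδ : 0 < δ)
    (hP : ∀ x, δ ≤ P x) (qs : ℝ) (xs : S)
    (hub : ∀ x, R x / P x ≤ qs) (hatt : R xs / P xs = qs)
    (F : ℝ → EReal) (hF : ∀ q, F q = ⨆ x, ((R x - q * P x : ℝ) : EReal)) :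
    (∀ q : ℝ, q < qs → 0 < F q) ∧ F qs = 0 ∧ (∀ q : ℝ, qs ≤ q → F q ≤ 0) := by
  have hPpos : ∀ x, 0 < P x := fun x => lt_of_lt_of_le hδ (hP x)
  have hle : ∀ x, R x ≤ qs * P x := by
    intro x
    have := (div_le_iff₀ (hPpos x)).mp (hub x)
    linarith
  have heq : R xs = qs * P xs := by
    have := hatt
    rw [div_eq_iff (hPpos xs).ne'] at this
    exact this
  have hsle : ∀ q : ℝ, qs ≤ q → F q ≤ 0 := by
    intro q hq
    rw [hF]
    apply iSup_le
    intro x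
    have : R x - q * P x ≤ 0 := by nlinarith [hle x, hPpos x]
    exact_mod_cast EReal.coe_le_coe_iff.mpr this
  refine ⟨?_, ?_, hsle⟩
  · intro q hq
    rw [hF]
    refine lt_of_lt_of_le ?_ (le_iSup _ xs)
    have : (0 : ℝ) < R xs - q * P xs := by nlinarith [hPpos xs]
    exact_mod_cast EReal.coe_lt_coe_iff.mpr this
  · refine le_antisymm (hsle qs le_rfl) ?_
    rw [hF]
    refine le_trans ?_ (le_iSup _ xs)
    have : R xs - qs * P xs = 0 := by linarith
    rw [this]; simp
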